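/- arXiv:2502.11058 — 3 statements merged into one kernel-verified Lean document; each statement's English description precedes it below -/
import Mathlib

section
/- Let f : ℝ^d → ℝ be β-smooth and μ-strongly convex with minimizer w* and f* = f(w*), and let {w_r^k} for k = 1,…,K be generated by partial-synchronization local SGD with stepsizes η_r ≤ 1/(4β). Define w̄_r = (1/K) Σ_{k=1}^K w_r^k, g_r = (1/K) Σ_{k=1}^K ∇f(w_r^k; ξ_r^k), and ḡ_r = (1/K) Σ_{k=1}^K ∇f(w_r^k). Then for every iteration r, E‖w̄_{r+1} − w*‖² ≤ (1 − μ η_r) E‖w̄_r − w*‖² + η_r² E‖g_r − ḡ_r‖² − (1/2) η_r E(f(w̄_r) − f*) + 2 η_r (β/K) Σ_{k=1}^K E‖w̄_r − w_r^k‖². -/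
/-!
Partial averaging leaves the sum over workers unchanged, so the worker average takes a plain
SGD step `w̄_{r+1} = w̄_r - η_r g_r`. Write `w̄_{r+1} - w* = A - η_r D` with
`A = w̄_r - w* - η_r ḡ_r` and the noise `D = g_r - ḡ_r`. The iterates `w_r^k` are measurable
functions of the seeds of the rounds before `r`, which are independent of the round-`r` seeds;
by Fubini and unbiasedness `E⟪A, D⟫ = 0`, hence `E‖w̄_{r+1} - w*‖² = E‖A‖² + η_r² E‖D‖²`.
Pointwise, `‖A‖²` is bounded by comparing `⟪ḡ_r, w̄_r - w*⟫` with the descent lemma and strong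
convexity at every `w_r^k`, and `‖ḡ_r‖²` with `‖∇f‖² ≤ 2β (f - f*)`; `η_r β ≤ 1/4` absorbs the
`η_r²` terms. Differentiability of `f` is not assumed: first-order convexity and the Lipschitz
bound already make `gradient f` a true gradient, which gives the descent lemma.
-/

open MeasureTheory ProbabilityTheory
open scoped RealInnerProductSpace

noncomputable section

section Average

variable {E ι : Type*} [NormedAddCommGroup E] [InnerProductSpace ℝ E] [Fintype ι]

theorem norm_smul_sum_sq_le (u : ι → E) :
    ‖(Fintype.card ι : ℝ)⁻¹ • ∑ i, u i‖ ^ 2 ≤ (Fintype.card ι : ℝ)⁻¹ * ∑ i, ‖u i‖ ^ 2 := by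
  set n : ℝ := (Fintype.card ι : ℝ)
  have hsum : ‖∑ i, u i‖ ^ 2 ≤ n * ∑ i, ‖u i‖ ^ 2 :=
    calc ‖∑ i, u i‖ ^ 2 ≤ (∑ i, ‖u i‖) ^ 2 := by gcongr; exact norm_sum_le _ _
      _ ≤ n * ∑ i, ‖u i‖ ^ 2 := by
        simpa [n] using sq_sum_le_card_mul_sum_sq (s := Finset.univ) (f := fun i => ‖u i‖)
  rw [norm_smul, mul_pow, Real.norm_of_nonneg (by positivity)]
  calc n⁻¹ ^ 2 * ‖∑ i, u i‖ ^ 2 ≤ n⁻¹ ^ 2 * (n * ∑ i, ‖u i‖ ^ 2) := by gcongr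
    _ = n⁻¹ * ∑ i, ‖u i‖ ^ 2 := by
      rcases eq_or_ne n 0 with hn | hn
      · simp [hn]
      · field_simp

end Average

section Mean

variable {V ι : Type*} [AddCommGroup V] [Module ℝ V] [Fintype ι] [Nonempty ι]

theorem sum_sub_smul_sum_eq_zero (v : ι → V) :
    ∑ k, (v k - (Fintype.card ι : ℝ)⁻¹ • ∑ j, v j) = 0 := by
  rw [Finset.sum_sub_distrib, Finset.sum_const, Finset.card_univ, ← Nat.cast_smul_eq_nsmul ℝ,
    smul_smul, mul_inv_cancel₀ (by positivity), one_smul, sub_self]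

theorem smul_sum_sub_eq_smul_sum_sub (v : ι → V) (w : V) :
    (Fintype.card ι : ℝ)⁻¹ • ∑ j, v j - w = (Fintype.card ι : ℝ)⁻¹ • ∑ j, (v j - w) := by
  rw [Finset.sum_sub_distrib, Finset.sum_const, Finset.card_univ, ← Nat.cast_smul_eq_nsmul ℝ,
    smul_sub, smul_smul, inv_mul_cancel₀ (by positivity), one_smul]

end Mean

section SmoothConvex

open Set

variable {E : Type*} [NormedAddCommGroup E] [InnerProductSpace ℝ E] [CompleteSpace E]
  {f : E → ℝ}

theorem hasGradientAt_of_convex_of_lipschitzWith {g : E → E} {K : NNReal}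
    (hconv : ∀ x y, f x + ⟪g x, y - x⟫ ≤ f y) (hg : LipschitzWith K g) (x : E) :
    HasGradientAt f (g x) x := by
  rw [hasGradientAt_iff_isLittleO]
  refine Asymptotics.IsBigO.trans_isLittleO ?_ (Asymptotics.isLittleO_pow_sub_sub x one_lt_two)
  refine Asymptotics.IsBigO.of_bound K (Filter.Eventually.of_forall fun y => ?_)
  -- the remainder lies between `0` and `⟪g y - g x, y - x⟫ ≤ K ‖y - x‖²`
  have hlow := hconv x y
  have hup : f y - f x ≤ ⟪g y, y - x⟫ := by
    have := hconv y x
    rw [← neg_sub y x, inner_neg_right] at this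
    linarith
  have hlip : ⟪g y - g x, y - x⟫ ≤ K * ‖y - x‖ ^ 2 :=
    calc ⟪g y - g x, y - x⟫ ≤ ‖g y - g x‖ * ‖y - x‖ := real_inner_le_norm _ _
      _ ≤ K * ‖y - x‖ * ‖y - x‖ := by gcongr; exact hg.norm_sub_le y x
      _ = K * ‖y - x‖ ^ 2 := by ring
  rw [inner_sub_left] at hlip
  rw [Real.norm_eq_abs, abs_le, norm_pow, norm_norm]
  constructor <;> nlinarith [sq_nonneg ‖y - x‖, K.coe_nonneg]

theorem le_add_inner_add_sq_of_lipschitzWith {g : E → E} {K : NNReal}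
    (hf : ∀ x, HasGradientAt f (g x) x) (hg : LipschitzWith K g) (x y : E) :
    f y ≤ f x + ⟪g x, y - x⟫ + K / 2 * ‖y - x‖ ^ 2 := by
  set v := y - x
  let φ : ℝ → ℝ := fun t => f (x + t • v) - t * ⟪g x, v⟫ - K / 2 * t ^ 2 * ‖v‖ ^ 2
  have hφ : ∀ t, HasDerivAt φ (⟪g (x + t • v), v⟫ - ⟪g x, v⟫ - K * t * ‖v‖ ^ 2) t := by
    intro t
    have hline : HasDerivAt (fun t : ℝ => x + t • v) v t := by
      simpa using ((hasDerivAt_id t).smul_const v).const_add x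
    have hcomp : HasDerivAt (fun t : ℝ => f (x + t • v)) ⟪g (x + t • v), v⟫ t :=
      (hf _).hasFDerivAt.comp_hasDerivAt t hline
    refine ((hcomp.sub ((hasDerivAt_id t).mul_const ⟪g x, v⟫)).sub
      (((hasDerivAt_pow 2 t).const_mul (K / 2 : ℝ)).mul_const (‖v‖ ^ 2))).congr_deriv ?_
    ring
  have hanti : AntitoneOn φ (Icc 0 1) := by
    refine antitoneOn_of_hasDerivWithinAt_nonpos (convex_Icc 0 1)
      (fun t _ => (hφ t).continuousAt.continuousWithinAt) (fun t _ => (hφ t).hasDerivWithinAt)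
      fun t ht => ?_
    rw [interior_Icc] at ht
    have := calc ⟪g (x + t • v), v⟫ - ⟪g x, v⟫
        _ = ⟪g (x + t • v) - g x, v⟫ := (inner_sub_left _ _ _).symm
        _ ≤ ‖g (x + t • v) - g x‖ * ‖v‖ := real_inner_le_norm _ _
        _ ≤ K * ‖x + t • v - x‖ * ‖v‖ := by gcongr; exact hg.norm_sub_le _ _
        _ = K * t * ‖v‖ ^ 2 := by
          rw [add_sub_cancel_left, norm_smul, Real.norm_of_nonneg ht.1.le]; ring
    linarith
  have := hanti (left_mem_Icc.2 zero_le_one) (right_mem_Icc.2 zero_le_one) zero_le_one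
  simp only [φ] at this
  norm_num [v] at this
  linarith

variable {β μ : ℝ}

theorem le_add_inner_gradient_add_sq_of_convex (hβ : 0 ≤ β)
    (hconv : ∀ x y, f x + ⟪gradient f x, y - x⟫ ≤ f y)
    (hsmooth : LipschitzWith β.toNNReal (gradient f)) (x y : E) :
    f y ≤ f x + ⟪gradient f x, y - x⟫ + β / 2 * ‖y - x‖ ^ 2 := by
  simpa only [Real.coe_toNNReal _ hβ] using le_add_inner_add_sq_of_lipschitzWith
    (hasGradientAt_of_convex_of_lipschitzWith hconv hsmooth) hsmooth x y

theorem norm_gradient_sq_le {wstar : E} (hβ : 0 < β)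
    (hdesc : ∀ x y, f y ≤ f x + ⟪gradient f x, y - x⟫ + β / 2 * ‖y - x‖ ^ 2)
    (hmin : ∀ w, f wstar ≤ f w) (x : E) :
    ‖gradient f x‖ ^ 2 ≤ 2 * β * (f x - f wstar) := by
  have h := hdesc x (x - β⁻¹ • gradient f x)
  rw [sub_sub_cancel_left, inner_neg_right, real_inner_smul_right, real_inner_self_eq_norm_sq,
    norm_neg, norm_smul, Real.norm_of_nonneg (inv_nonneg.2 hβ.le)] at h
  have hsq : β / 2 * (β⁻¹ * ‖gradient f x‖) ^ 2 = β⁻¹ * ‖gradient f x‖ ^ 2 / 2 := by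
    field_simp
  have hle : β⁻¹ * ‖gradient f x‖ ^ 2 ≤ 2 * (f x - f wstar) := by
    linarith [hmin (x - β⁻¹ • gradient f x)]
  calc ‖gradient f x‖ ^ 2 = β * (β⁻¹ * ‖gradient f x‖ ^ 2) := by field_simp
    _ ≤ β * (2 * (f x - f wstar)) := by gcongr
    _ = 2 * β * (f x - f wstar) := by ring

theorem le_inner_gradient_sub (wstar : E)
    (hdesc : ∀ x y, f y ≤ f x + ⟪gradient f x, y - x⟫ + β / 2 * ‖y - x‖ ^ 2)
    (hstrong : ∀ x y, f x + ⟪gradient f x, y - x⟫ + μ / 2 * ‖y - x‖ ^ 2 ≤ f y) (v w : E) :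
    f w - f wstar + μ / 2 * ‖v - wstar‖ ^ 2 - β / 2 * ‖w - v‖ ^ 2
      ≤ ⟪gradient f v, w - wstar⟫ := by
  have h₁ := hdesc v w
  have h₂ := hstrong v wstar
  rw [show w - wstar = (w - v) - (wstar - v) by abel, inner_sub_right, norm_sub_rev v wstar]
  linarith

variable {ι : Type*} [Fintype ι] [Nonempty ι]

theorem le_inner_smul_sum_gradient (wstar : E)
    (hdesc : ∀ x y, f y ≤ f x + ⟪gradient f x, y - x⟫ + β / 2 * ‖y - x‖ ^ 2)
    (hstrong : ∀ x y, f x + ⟪gradient f x, y - x⟫ + μ / 2 * ‖y - x‖ ^ 2 ≤ f y) (hμ : 0 ≤ μ)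
    (v : ι → E) :
    f ((Fintype.card ι : ℝ)⁻¹ • ∑ k, v k) - f wstar
        + μ / 2 * ‖(Fintype.card ι : ℝ)⁻¹ • ∑ k, v k - wstar‖ ^ 2
        - β / 2 * ((Fintype.card ι : ℝ)⁻¹ * ∑ k, ‖(Fintype.card ι : ℝ)⁻¹ • ∑ j, v j - v k‖ ^ 2)
      ≤ ⟪(Fintype.card ι : ℝ)⁻¹ • ∑ k, gradient f (v k),
          (Fintype.card ι : ℝ)⁻¹ • ∑ k, v k - wstar⟫ := by
  set n : ℝ := (Fintype.card ι : ℝ)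
  set wbar := n⁻¹ • ∑ k, v k
  have hn : n ≠ 0 := by positivity
  have hjensen : ‖wbar - wstar‖ ^ 2 ≤ n⁻¹ * ∑ k, ‖v k - wstar‖ ^ 2 := by
    rw [smul_sum_sub_eq_smul_sum_sub]; exact norm_smul_sum_sq_le _
  have hsum := mul_le_mul_of_nonneg_left
    (Finset.sum_le_sum fun k (_ : k ∈ Finset.univ) =>
      le_inner_gradient_sub wstar hdesc hstrong (v k) wbar)
    (inv_nonneg.2 (Nat.cast_nonneg (Fintype.card ι)))
  rw [Finset.sum_sub_distrib, Finset.sum_add_distrib, Finset.sum_const, Finset.card_univ,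
    nsmul_eq_mul, ← Finset.mul_sum, ← Finset.mul_sum, ← sum_inner, ← real_inner_smul_left] at hsum
  have hexpand : n⁻¹ * (n * (f wbar - f wstar) + μ / 2 * ∑ k, ‖v k - wstar‖ ^ 2
      - β / 2 * ∑ k, ‖wbar - v k‖ ^ 2) = f wbar - f wstar
        + μ / 2 * (n⁻¹ * ∑ k, ‖v k - wstar‖ ^ 2) - β / 2 * (n⁻¹ * ∑ k, ‖wbar - v k‖ ^ 2) := by
    field_simp
  linarith [mul_le_mul_of_nonneg_left hjensen (by positivity : 0 ≤ μ / 2)]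

theorem norm_smul_sum_gradient_sq_le {wstar : E} (hβ : 0 < β)
    (hdesc : ∀ x y, f y ≤ f x + ⟪gradient f x, y - x⟫ + β / 2 * ‖y - x‖ ^ 2)
    (hmin : ∀ w, f wstar ≤ f w) (v : ι → E) :
    ‖(Fintype.card ι : ℝ)⁻¹ • ∑ k, gradient f (v k)‖ ^ 2
      ≤ 2 * β * (f ((Fintype.card ι : ℝ)⁻¹ • ∑ k, v k) - f wstar)
        + β ^ 2 * ((Fintype.card ι : ℝ)⁻¹
          * ∑ k, ‖(Fintype.card ι : ℝ)⁻¹ • ∑ j, v j - v k‖ ^ 2) := by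
  set n : ℝ := (Fintype.card ι : ℝ)
  set wbar := n⁻¹ • ∑ k, v k
  have hn : n ≠ 0 := by positivity
  have hvalues : ∑ k, (f (v k) - f wstar)
      ≤ n * (f wbar - f wstar) + β / 2 * ∑ k, ‖wbar - v k‖ ^ 2 := by
    have h := Finset.sum_le_sum fun k (_ : k ∈ Finset.univ) => hdesc wbar (v k)
    rw [Finset.sum_add_distrib, Finset.sum_add_distrib, ← inner_sum, sum_sub_smul_sum_eq_zero,
      inner_zero_right, Finset.sum_const, Finset.card_univ, nsmul_eq_mul, ← Finset.mul_sum] at h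
    simp_rw [norm_sub_rev (v _) wbar] at h
    rw [Finset.sum_sub_distrib, Finset.sum_const, Finset.card_univ, nsmul_eq_mul]
    linarith
  have hgrad : ∑ k, ‖gradient f (v k)‖ ^ 2 ≤ 2 * β * ∑ k, (f (v k) - f wstar) := by
    rw [Finset.mul_sum]
    exact Finset.sum_le_sum fun k _ => norm_gradient_sq_le hβ hdesc hmin (v k)
  calc ‖n⁻¹ • ∑ k, gradient f (v k)‖ ^ 2 ≤ n⁻¹ * ∑ k, ‖gradient f (v k)‖ ^ 2 :=
        norm_smul_sum_sq_le _
    _ ≤ n⁻¹ * (2 * β * (n * (f wbar - f wstar) + β / 2 * ∑ k, ‖wbar - v k‖ ^ 2)) := by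
        gcongr; exact hgrad.trans (by gcongr)
    _ = 2 * β * (f wbar - f wstar) + β ^ 2 * (n⁻¹ * ∑ k, ‖wbar - v k‖ ^ 2) := by
        field_simp

theorem norm_averaged_gradient_step_sq_le {wstar : E} (hβ : 0 < β) (hμ : 0 ≤ μ)
    (hdesc : ∀ x y, f y ≤ f x + ⟪gradient f x, y - x⟫ + β / 2 * ‖y - x‖ ^ 2)
    (hstrong : ∀ x y, f x + ⟪gradient f x, y - x⟫ + μ / 2 * ‖y - x‖ ^ 2 ≤ f y)
    (hmin : ∀ w, f wstar ≤ f w) {η : ℝ} (hη : 0 ≤ η) (hηβ : η ≤ 1 / (4 * β)) (v : ι → E) :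
    ‖(Fintype.card ι : ℝ)⁻¹ • ∑ k, v k - wstar
        - η • ((Fintype.card ι : ℝ)⁻¹ • ∑ k, gradient f (v k))‖ ^ 2
      ≤ (1 - μ * η) * ‖(Fintype.card ι : ℝ)⁻¹ • ∑ k, v k - wstar‖ ^ 2
        - 1 / 2 * η * (f ((Fintype.card ι : ℝ)⁻¹ • ∑ k, v k) - f wstar)
        + 2 * η * (β / Fintype.card ι)
          * ∑ k, ‖(Fintype.card ι : ℝ)⁻¹ • ∑ j, v j - v k‖ ^ 2 := by
  have hP := le_inner_smul_sum_gradient wstar hdesc hstrong hμ v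
  have hG := norm_smul_sum_gradient_sq_le hβ hdesc hmin v
  set n : ℝ := (Fintype.card ι : ℝ)
  set wbar := n⁻¹ • ∑ k, v k
  set gbar := n⁻¹ • ∑ k, gradient f (v k)
  set T := n⁻¹ * ∑ k, ‖wbar - v k‖ ^ 2
  have hF : 0 ≤ f wbar - f wstar := sub_nonneg.2 (hmin wbar)
  have hβη : 0 ≤ 1 - 4 * (β * η) := by
    rw [le_div_iff₀ (by positivity)] at hηβ; linarith
  have hβηT : 0 ≤ β * η * T := by positivity
  have hS : 2 * η * (β / n) * ∑ k, ‖wbar - v k‖ ^ 2 = 2 * η * β * T := by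
    simp only [T]; ring
  rw [hS, norm_sub_sq_real, real_inner_smul_right, real_inner_comm, norm_smul,
    Real.norm_of_nonneg hη, mul_pow]
  linarith [mul_le_mul_of_nonneg_left hP (by positivity : 0 ≤ 2 * η),
    mul_le_mul_of_nonneg_left hG (sq_nonneg η), mul_nonneg (mul_nonneg hη hF) hβη,
    mul_nonneg hβηT hβη, mul_nonneg hη hF]

end SmoothConvex

section Independence

open Function

variable {Ω α β G : Type*} [MeasurableSpace Ω] [MeasurableSpace α] [MeasurableSpace β]
  [NormedAddCommGroup G] {P : Measure Ω} [IsFiniteMeasure P] {X : Ω → α} {Y : Ω → β}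

theorem ProbabilityTheory.IndepFun.integrable_uncurry (hXY : IndepFun X Y P)
    (hX : Measurable X) (hY : Measurable Y) {F : α → β → G}
    (hF : StronglyMeasurable (uncurry F)) (hint : Integrable (fun ω => F (X ω) (Y ω)) P) :
    Integrable (uncurry F) ((P.map X).prod (P.map Y)) := by
  rw [← hXY.map_prod_eq_prod_map_map hX.aemeasurable hY.aemeasurable]
  exact (integrable_map_measure hF.aestronglyMeasurable (hX.prodMk hY).aemeasurable).2 hint

theorem ProbabilityTheory.IndepFun.ae_integrable_of_integrable_comp (hXY : IndepFun X Y P)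
    (hX : Measurable X) (hY : Measurable Y) {F : α → β → G}
    (hF : StronglyMeasurable (uncurry F)) (hint : Integrable (fun ω => F (X ω) (Y ω)) P) :
    ∀ᵐ ω ∂P, Integrable (F (X ω)) (P.map Y) :=
  ae_of_ae_map hX.aemeasurable (hXY.integrable_uncurry hX hY hF hint).prod_right_ae

theorem ProbabilityTheory.IndepFun.integral_comp_eq_integral_integral [NormedSpace ℝ G]
    [CompleteSpace G] (hXY : IndepFun X Y P) (hX : Measurable X) (hY : Measurable Y)
    {F : α → β → G} (hF : StronglyMeasurable (uncurry F))
    (hint : Integrable (fun ω => F (X ω) (Y ω)) P) :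
    ∫ ω, F (X ω) (Y ω) ∂P = ∫ ω, ∫ y, F (X ω) y ∂(P.map Y) ∂P :=
  calc ∫ ω, F (X ω) (Y ω) ∂P = ∫ p, uncurry F p ∂(P.map fun ω => (X ω, Y ω)) :=
        (integral_map (hX.prodMk hY).aemeasurable hF.aestronglyMeasurable).symm
    _ = ∫ x, ∫ y, F x y ∂(P.map Y) ∂(P.map X) := by
        rw [hXY.map_prod_eq_prod_map_map hX.aemeasurable hY.aemeasurable,
          integral_prod _ (hXY.integrable_uncurry hX hY hF hint)]
        rfl
    _ = ∫ ω, ∫ y, F (X ω) y ∂(P.map Y) ∂P :=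
        integral_map hX.aemeasurable hF.integral_prod_right'.aestronglyMeasurable

end Independence

theorem integrable_of_integrable_sum_comp_eval {ι Ξ G : Type*} [Fintype ι] [DecidableEq ι]
    [MeasurableSpace Ξ] [NormedAddCommGroup G] {ν : Measure Ξ} [IsProbabilityMeasure ν]
    {g : ι → Ξ → G} (hg : ∀ i, AEStronglyMeasurable (g i) ν)
    (h : Integrable (fun y : ι → Ξ => ∑ i, g i (y i)) (Measure.pi fun _ => ν)) (k : ι) :
    Integrable (g k) ν := by
  -- Fubini after splitting off the `k`-th coordinate, with the other coordinates frozen at `y`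
  set e := MeasurableEquiv.piEquivPiSubtypeProd (fun _ : ι => Ξ) (· = k)
  have hsplit := ((measurePreserving_piEquivPiSubtypeProd (fun _ : ι => ν) (· = k)).symm
    e).integrable_comp_emb e.symm.measurableEmbedding |>.2 h
  obtain ⟨y, hy⟩ := hsplit.prod_left_ae.exists
  have hsum : ∀ x : {i // i = k} → Ξ, ∑ i, g i (e.symm (x, y) i)
      = g k (x ⟨k, rfl⟩) + ∑ i : {i // ¬ i = k}, g i (y i) := by
    intro x
    rw [← Finset.add_sum_erase _ _ (Finset.mem_univ k),
      Finset.sum_subtype (Finset.univ.erase k) (p := (¬ · = k)) (by simp)]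
    simp only [e, MeasurableEquiv.piEquivPiSubtypeProd_symm_apply, dif_pos]
    exact congrArg _ (Finset.sum_congr rfl fun i _ => by rw [dif_neg i.2])
  have hk := (hy.sub (integrable_const (∑ i : {i // ¬ i = k}, g i (y i)))).congr
    (g := fun x => g k (x ⟨k, rfl⟩)) (ae_of_all _ fun x => by
      simp only [Function.comp_apply, hsum, Pi.sub_apply, add_sub_cancel_right])
  refine ((measurePreserving_eval (fun _ => ν) (⟨k, rfl⟩ : {i // i = k})).integrable_comp
    (hg k)).1 ?_
  -- the two sides carry different `Fintype {i // i = k}` instances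
  convert hk using 2
  rfl

section Moments

variable {Ω E : Type*} [MeasurableSpace Ω] [NormedAddCommGroup E] [InnerProductSpace ℝ E]
  {P : Measure Ω}

theorem integrable_inner_of_integrable_norm_sq {A D : Ω → E} (hA : AEStronglyMeasurable A P)
    (hD : AEStronglyMeasurable D P) (hA2 : Integrable (fun ω => ‖A ω‖ ^ 2) P)
    (hD2 : Integrable (fun ω => ‖D ω‖ ^ 2) P) : Integrable (fun ω => ⟪A ω, D ω⟫) P := by
  refine (hA2.add hD2).mono' (hA.inner hD) (ae_of_all _ fun ω => ?_)
  calc ‖⟪A ω, D ω⟫‖ ≤ ‖A ω‖ * ‖D ω‖ := by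
        rw [Real.norm_eq_abs]; exact abs_real_inner_le_norm _ _
    _ ≤ ‖A ω‖ ^ 2 + ‖D ω‖ ^ 2 := by nlinarith [sq_nonneg (‖A ω‖ - ‖D ω‖)]

theorem integral_norm_sub_smul_sq {A D : Ω → E} (hA2 : Integrable (fun ω => ‖A ω‖ ^ 2) P)
    (hD2 : Integrable (fun ω => ‖D ω‖ ^ 2) P) (hAD : Integrable (fun ω => ⟪A ω, D ω⟫) P)
    (c : ℝ) :
    ∫ ω, ‖A ω - c • D ω‖ ^ 2 ∂P = ∫ ω, ‖A ω‖ ^ 2 ∂P - 2 * c * ∫ ω, ⟪A ω, D ω⟫ ∂P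
      + c ^ 2 * ∫ ω, ‖D ω‖ ^ 2 ∂P := by
  have hexp : ∀ ω, ‖A ω - c • D ω‖ ^ 2 = ‖A ω‖ ^ 2 - 2 * c * ⟪A ω, D ω⟫ + c ^ 2 * ‖D ω‖ ^ 2 := by
    intro ω
    rw [norm_sub_sq_real, real_inner_smul_right, norm_smul, mul_pow, Real.norm_eq_abs, sq_abs]
    ring
  simp_rw [hexp]
  rw [integral_add (hA2.sub' (hAD.const_mul _)) (hD2.const_mul _),
    integral_sub hA2 (hAD.const_mul _), integral_const_mul, integral_const_mul]

theorem integral_smul_sub_eq_zero_of_integral_eq [CompleteSpace E] [IsProbabilityMeasure P]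
    {F : Ω → E} {m : E} (hF : ∫ ω, F ω ∂P = m) (t : ℝ)
    (hint : Integrable (fun ω => t • (F ω - m)) P) : ∫ ω, t • (F ω - m) ∂P = 0 := by
  rcases eq_or_ne t 0 with rfl | ht
  · simp
  have hF' : Integrable F P := (integrable_add_const_iff (c := -m)).1 (by
    simpa only [sub_eq_add_neg] using (integrable_fun_smul_iff ht _).1 hint)
  rw [integral_smul, integral_sub hF' (integrable_const m), hF]
  simp

end Moments

section Orthogonality

open Function

variable {Ω α Ξ ι E : Type*} [MeasurableSpace Ω] [MeasurableSpace α] [MeasurableSpace Ξ]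
  [Fintype ι] [DecidableEq ι] [NormedAddCommGroup E] [InnerProductSpace ℝ E] [CompleteSpace E]
  [MeasurableSpace E] [BorelSpace E] [SecondCountableTopology E] {P : Measure Ω}
  [IsProbabilityMeasure P] {ν : Measure Ξ} [IsProbabilityMeasure ν] {X : Ω → α}
  {Y : Ω → ι → Ξ}

theorem integral_inner_sum_eq_zero_of_indepFun (hX : Measurable X) (hY : Measurable Y)
    (hXY : IndepFun X Y P) (hlaw : P.map Y = Measure.pi fun _ => ν) {a : α → E}
    (ha : Measurable a) {h : ι → α → Ξ → E} (hh : ∀ k, Measurable (uncurry (h k)))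
    (hmean : ∀ k x, Integrable (h k x) ν → ∫ s, h k x s ∂ν = 0)
    (hint : Integrable (fun ω => ∑ k, h k (X ω) (Y ω k)) P)
    (hint' : Integrable (fun ω => ⟪a (X ω), ∑ k, h k (X ω) (Y ω k)⟫) P) :
    ∫ ω, ⟪a (X ω), ∑ k, h k (X ω) (Y ω k)⟫ ∂P = 0 := by
  have hsum : Measurable (uncurry fun x (y : ι → Ξ) => ∑ k, h k x (y k)) :=
    Finset.measurable_sum _ fun k _ =>
      (hh k).comp (measurable_fst.prodMk ((measurable_pi_apply k).comp measurable_snd))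
  have hsec := hXY.ae_integrable_of_integrable_comp hX hY hsum.stronglyMeasurable hint
  rw [hXY.integral_comp_eq_integral_integral hX hY
    (F := fun x y => ⟪a x, ∑ k, h k x (y k)⟫)
    ((ha.comp measurable_fst).inner hsum).stronglyMeasurable hint', hlaw]
  refine integral_eq_zero_of_ae ?_
  filter_upwards [hsec] with ω hω
  rw [hlaw] at hω
  have hk : ∀ k, Integrable (h k (X ω)) ν := integrable_of_integrable_sum_comp_eval
    (fun k => ((hh k).comp measurable_prodMk_left).aestronglyMeasurable) hω
  have heval : ∀ k, ∫ y : ι → Ξ, h k (X ω) (y k) ∂(Measure.pi fun _ => ν) = 0 := fun k => by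
    have hmap := (measurePreserving_eval (fun _ => ν) k).map_eq
    rw [← integral_map (measurable_pi_apply k).aemeasurable
      (by rw [hmap]; exact (hk k).aestronglyMeasurable), hmap]
    exact hmean k _ (hk k)
  rw [integral_inner hω, integral_finsetSum (f := fun k (y : ι → Ξ) => h k (X ω) (y k)) _
    fun k _ => ((measurePreserving_eval (fun _ => ν) k).integrable_comp
      (hk k).aestronglyMeasurable).2 (hk k)]
  simp [heval]

theorem integral_norm_sub_smul_sq_le_of_indepFun (hX : Measurable X) (hY : Measurable Y)
    (hXY : IndepFun X Y P) (hlaw : P.map Y = Measure.pi fun _ => ν)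
    {A D : Ω → E} {a : α → E} (ha : Measurable a) (hA : ∀ ω, A ω = a (X ω))
    {h : ι → α → Ξ → E} (hh : ∀ k, Measurable (uncurry (h k)))
    (hmean : ∀ k x, Integrable (h k x) ν → ∫ s, h k x s ∂ν = 0)
    (hD : ∀ ω, D ω = ∑ k, h k (X ω) (Y ω k)) (hD2 : Integrable (fun ω => ‖D ω‖ ^ 2) P)
    {B : Ω → ℝ} (hB : Integrable B P) (hAB : ∀ ω, ‖A ω‖ ^ 2 ≤ B ω) (c : ℝ) :
    ∫ ω, ‖A ω - c • D ω‖ ^ 2 ∂P ≤ ∫ ω, B ω ∂P + c ^ 2 * ∫ ω, ‖D ω‖ ^ 2 ∂P := by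
  obtain rfl : A = fun ω => a (X ω) := funext hA
  obtain rfl : D = fun ω => ∑ k, h k (X ω) (Y ω k) := funext hD
  have hAm : AEStronglyMeasurable (fun ω => a (X ω)) P := (ha.comp hX).aestronglyMeasurable
  have hDm : AEStronglyMeasurable (fun ω => ∑ k, h k (X ω) (Y ω k)) P :=
    (Finset.measurable_sum _ fun k _ =>
      (hh k).comp (hX.prodMk ((measurable_pi_apply k).comp hY))).aestronglyMeasurable
  have hA2 : Integrable (fun ω => ‖a (X ω)‖ ^ 2) P :=
    hB.mono' (hAm.norm.pow 2) (ae_of_all _ fun ω => by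
      rw [Real.norm_of_nonneg (by positivity)]; exact hAB ω)
  have hAD := integrable_inner_of_integrable_norm_sq hAm hDm hA2 hD2
  have hD1 : Integrable (fun ω => ∑ k, h k (X ω) (Y ω k)) P :=
    ((memLp_two_iff_integrable_sq_norm hDm).2 hD2).integrable one_le_two
  rw [integral_norm_sub_smul_sq hA2 hD2 hAD,
    integral_inner_sum_eq_zero_of_indepFun hX hY hXY hlaw ha hh hmean hD1 hAD]
  linarith [integral_mono hA2 hB hAB]

end Orthogonality

theorem exists_measurable_of_recursion {Ω α β : Type*} [MeasurableSpace α] [MeasurableSpace β]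
    {x : ℕ → Ω → α} {ζ : ℕ → Ω → β} {F : ℕ → α → β → α} (hF : ∀ n, Measurable (Function.uncurry (F n)))
    {a : α} (h0 : ∀ ω, x 0 ω = a) (hsucc : ∀ n ω, x (n + 1) ω = F n (x n ω) (ζ n ω)) (n : ℕ) :
    ∃ Φ : ({m // m < n} → β) → α, Measurable Φ ∧ ∀ ω, x n ω = Φ fun m => ζ m ω := by
  induction n with
  | zero => exact ⟨fun _ => a, measurable_const, h0⟩
  | succ n ih =>
    obtain ⟨Φ, hΦ, hx⟩ := ih
    refine ⟨fun v => F n (Φ fun m => v ⟨m, m.2.trans n.lt_succ_self⟩) (v ⟨n, n.lt_succ_self⟩),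
      (hF n).comp ((hΦ.comp (measurable_pi_lambda _ fun m => measurable_pi_apply _)).prodMk
        (measurable_pi_apply _)), fun ω => by rw [hsucc, hx]⟩

section PartialSync

open Function

variable {d K : ℕ} (sync : Fin d → Prop) [DecidablePred sync]

def partialSync (u : Fin K → EuclideanSpace ℝ (Fin d)) (k : Fin K) : EuclideanSpace ℝ (Fin d) :=
  WithLp.toLp 2 fun i => if sync i then (K : ℝ)⁻¹ • ∑ j, u j i else u k i

theorem measurable_partialSync : Measurable (partialSync (K := K) sync) := by
  refine measurable_pi_lambda _ fun k =>
    (WithLp.measurable_toLp 2 _).comp (measurable_pi_lambda _ fun i => ?_)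
  have hcoord : ∀ j, Measurable fun u : Fin K → EuclideanSpace ℝ (Fin d) => u j i := fun j =>
    (measurable_pi_apply i).comp ((WithLp.measurable_ofLp 2 _).comp (measurable_pi_apply j))
  split_ifs
  · exact (Finset.measurable_sum _ fun j _ => hcoord j).const_smul ((K : ℝ)⁻¹)
  · exact hcoord k

theorem measurable_partialSync_sgdStep {Ξ : Type*} [MeasurableSpace Ξ]
    {SG : EuclideanSpace ℝ (Fin d) → Ξ → EuclideanSpace ℝ (Fin d)} (hSG : Measurable (uncurry SG))
    (η : ℝ) :
    Measurable (uncurry fun (v : Fin K → EuclideanSpace ℝ (Fin d)) (s : Fin K → Ξ) =>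
      partialSync sync fun k => v k - η • SG (v k) (s k)) := by
  refine (measurable_partialSync sync).comp (measurable_pi_lambda _ fun k => ?_)
  have hv : Measurable fun p : (Fin K → EuclideanSpace ℝ (Fin d)) × (Fin K → Ξ) => p.1 k :=
    (measurable_pi_apply k).comp measurable_fst
  exact hv.sub ((hSG.comp (hv.prodMk ((measurable_pi_apply k).comp measurable_snd))).const_smul η)

theorem sum_partialSync (hK : K ≠ 0) (u : Fin K → EuclideanSpace ℝ (Fin d)) :
    ∑ k, partialSync sync u k = ∑ k, u k := by
  ext i
  simp only [partialSync, WithLp.ofLp_sum, Finset.sum_apply]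
  split_ifs
  · simp
    field_simp
  · rfl

theorem smul_sum_partialSync_sub_smul (hK : K ≠ 0) (v u : Fin K → EuclideanSpace ℝ (Fin d))
    (c : ℝ) :
    (K : ℝ)⁻¹ • ∑ k, partialSync sync (fun j => v j - c • u j) k
      = (K : ℝ)⁻¹ • ∑ k, v k - c • ((K : ℝ)⁻¹ • ∑ k, u k) := by
  rw [sum_partialSync sync hK, Finset.sum_sub_distrib, ← Finset.smul_sum, smul_sub, smul_comm]

theorem exists_measurable_partialSync_iterate {Ω Ξ : Type*} [MeasurableSpace Ξ]
    {sync : ℕ → Fin d → Prop} [∀ n, DecidablePred (sync n)]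
    {SG : EuclideanSpace ℝ (Fin d) → Ξ → EuclideanSpace ℝ (Fin d)} (hSG : Measurable (uncurry SG))
    {η : ℕ → ℝ} {w : ℕ → Fin K → Ω → EuclideanSpace ℝ (Fin d)} {ξ : ℕ → Fin K → Ω → Ξ}
    {w0 : EuclideanSpace ℝ (Fin d)} (hinit : ∀ k ω, w 0 k ω = w0)
    (hstep : ∀ n ω k, w (n + 1) k ω
      = partialSync (sync n) (fun j => w n j ω - η n • SG (w n j ω) (ξ n j ω)) k) (r : ℕ) :
    ∃ Φ : ({m // m < r} → Fin K → Ξ) → Fin K → EuclideanSpace ℝ (Fin d),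
      Measurable Φ ∧ ∀ ω k, w r k ω = Φ (fun m k => ξ m k ω) k := by
  obtain ⟨Φ, hΦ, hw⟩ := exists_measurable_of_recursion (x := fun n ω k => w n k ω)
    (ζ := fun n ω k => ξ n k ω) (fun n => measurable_partialSync_sgdStep (sync n) hSG (η n))
    (fun ω => funext fun k => hinit k ω) (fun n ω => funext (hstep n ω)) r
  exact ⟨Φ, hΦ, fun ω k => congrFun (hw ω) k⟩

end PartialSync

section Rows

variable {Ω Ξ ι : Type*} [MeasurableSpace Ω] [MeasurableSpace Ξ] [Fintype ι] {P : Measure Ω}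
  {ξ : ℕ → ι → Ω → Ξ}

theorem ProbabilityTheory.iIndepFun.indepFun_rows_lt
    (hind : iIndepFun (fun q : ℕ × ι => ξ q.1 q.2) P) (hmeas : ∀ n k, Measurable (ξ n k))
    (r : ℕ) : IndepFun (fun ω (m : {m // m < r}) k => ξ m k ω) (fun ω k => ξ r k ω) P := by
  have hdisj : Disjoint (Finset.range r ×ˢ Finset.univ) ({r} ×ˢ (Finset.univ : Finset ι)) := by
    simp only [Finset.disjoint_left, Finset.mem_product, Finset.mem_range, Finset.mem_singleton]
    omega
  refine (hind.indepFun_finset _ _ hdisj fun q => hmeas q.1 q.2).comp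
    (φ := fun v (m : {m // m < r}) k => v ⟨(m, k), by simp [m.2]⟩)
    (ψ := fun v k => v ⟨(r, k), by simp⟩) ?_ ?_
  · exact measurable_pi_lambda _ fun _ => measurable_pi_lambda _ fun _ => measurable_pi_apply _
  · exact measurable_pi_lambda _ fun _ => measurable_pi_apply _

theorem ProbabilityTheory.iIndepFun.map_row_eq_pi [IsProbabilityMeasure P] {ν : Measure Ξ}
    (hind : iIndepFun (fun q : ℕ × ι => ξ q.1 q.2) P) (hmeas : ∀ n k, Measurable (ξ n k))
    (hlaw : ∀ n k, P.map (ξ n k) = ν) (r : ℕ) :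
    P.map (fun ω k => ξ r k ω) = Measure.pi fun _ => ν := by
  rw [(hind.precomp (g := fun k : ι => (r, k)) fun _ _ h => (Prod.mk.inj h).2).map_fun_eq_pi_map
    fun k => (hmeas r k).aemeasurable]
  simp [hlaw]

end Rows

theorem averaged_weights_one_step_inequality_general
    (d L K H : ℕ) (hK : 0 < K)
    (f : EuclideanSpace ℝ (Fin d) → ℝ)
    (β μ : ℝ) (hβ : 0 < β) (hμ : 0 < μ)
    (hsmooth : LipschitzWith β.toNNReal (fun x => gradient f x))
    (hstrong : ∀ x y, f x + ⟪gradient f x, y - x⟫ + μ / 2 * ‖y - x‖ ^ 2 ≤ f y)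
    (wstar : EuclideanSpace ℝ (Fin d)) (hmin : ∀ w, f wstar ≤ f w)
    -- probability space and noise
    (Ω : Type) [MeasurableSpace Ω] (P : Measure Ω) [IsProbabilityMeasure P]
    (Ξ : Type) [MeasurableSpace Ξ] (ν : Measure Ξ) [IsProbabilityMeasure ν]
    (ξ : ℕ → Fin K → Ω → Ξ)
    (hξmeas : ∀ r k, Measurable (ξ r k))
    (hξlaw : ∀ r k, Measure.map (ξ r k) P = ν)
    (hξindep : iIndepFun (fun q : ℕ × Fin K => ξ q.1 q.2) P)
    -- unbiased stochastic gradient oracle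
    (SG : EuclideanSpace ℝ (Fin d) → Ξ → EuclideanSpace ℝ (Fin d))
    (hSGmeas : Measurable (Function.uncurry SG))
    (hunbiased : ∀ x, ∫ s, SG x s ∂ν = gradient f x)
    -- stepsizes
    (η : ℕ → ℝ) (hηpos : ∀ r, 0 < η r) (hηsmall : ∀ r, η r ≤ 1 / (4 * β))
    -- layer structure and iterates of partial-synchronization local SGD
    (layer : Fin d → Fin L) (Hidx : Fin L → Fin H)
    (w : ℕ → Fin K → Ω → EuclideanSpace ℝ (Fin d))
    (w0 : EuclideanSpace ℝ (Fin d))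
    (hinit : ∀ k ω, w 0 k ω = w0)
    (hupdate : ∀ r k ω (i : Fin d),
      w (r + 1) k ω i =
        if (r + 1) % H = (Hidx (layer i) : ℕ) then
          (K : ℝ)⁻¹ • ∑ j, (w r j ω - η r • SG (w r j ω) (ξ r j ω)) i
        else (w r k ω - η r • SG (w r k ω) (ξ r k ω)) i)
    -- averaged iterates and gradients
    (wbar : ℕ → Ω → EuclideanSpace ℝ (Fin d))
    (hwbar : ∀ r ω, wbar r ω = (K : ℝ)⁻¹ • ∑ k, w r k ω)
    (g gbar : ℕ → Ω → EuclideanSpace ℝ (Fin d))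
    (hg : ∀ r ω, g r ω = (K : ℝ)⁻¹ • ∑ k, SG (w r k ω) (ξ r k ω))
    (hgbar : ∀ r ω, gbar r ω = (K : ℝ)⁻¹ • ∑ k, gradient f (w r k ω))
    -- integrability of all quantities appearing in the inequality
    (hint₁ : ∀ r, Integrable (fun ω => ‖wbar r ω - wstar‖ ^ 2) P)
    (hint₂ : ∀ r, Integrable (fun ω => ‖g r ω - gbar r ω‖ ^ 2) P)
    (hint₃ : ∀ r, Integrable (fun ω => f (wbar r ω)) P)
    (hint₄ : ∀ r k, Integrable (fun ω => ‖wbar r ω - w r k ω‖ ^ 2) P) :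
    ∀ r, ∫ ω, ‖wbar (r + 1) ω - wstar‖ ^ 2 ∂P ≤
      (1 - μ * η r) * ∫ ω, ‖wbar r ω - wstar‖ ^ 2 ∂P
        + η r ^ 2 * ∫ ω, ‖g r ω - gbar r ω‖ ^ 2 ∂P
        - 1 / 2 * η r * ∫ ω, (f (wbar r ω) - f wstar) ∂P
        + 2 * η r * (β / K) * ∑ k, ∫ ω, ‖wbar r ω - w r k ω‖ ^ 2 ∂P := by
  intro r
  have : Nonempty (Fin K) := ⟨⟨0, hK⟩⟩
  have hdesc := le_add_inner_gradient_add_sq_of_convex hβ.le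
    (fun x y => (le_add_of_nonneg_right (by positivity)).trans (hstrong x y)) hsmooth
  have hstep : ∀ n ω k, w (n + 1) k ω = partialSync (fun i => (n + 1) % H = Hidx (layer i))
      (fun j => w n j ω - η n • SG (w n j ω) (ξ n j ω)) k :=
    fun n ω k => by ext i; exact hupdate n k ω i
  obtain ⟨Φ, hΦ, hw⟩ := exists_measurable_partialSync_iterate hSGmeas hinit hstep r
  set X : Ω → {m // m < r} → Fin K → Ξ := fun ω m k => ξ m k ω
  have hgrad : Measurable (gradient f) := hsmooth.continuous.measurable
  set a : ({m // m < r} → Fin K → Ξ) → EuclideanSpace ℝ (Fin d) := fun x =>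
    (K : ℝ)⁻¹ • ∑ k, Φ x k - wstar - η r • ((K : ℝ)⁻¹ • ∑ k, gradient f (Φ x k))
  set h : Fin K → ({m // m < r} → Fin K → Ξ) → Ξ → EuclideanSpace ℝ (Fin d) := fun k x s =>
    (K : ℝ)⁻¹ • (SG (Φ x k) s - gradient f (Φ x k))
  have ha : Measurable a := by fun_prop
  have hh : ∀ k, Measurable (Function.uncurry (h k)) := fun k => by simp only [h]; fun_prop
  have hA : ∀ ω, wbar r ω - wstar - η r • gbar r ω = a (X ω) := fun ω => by
    simp only [a, hwbar, hgbar, hw]; rfl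
  have hD : ∀ ω, g r ω - gbar r ω = ∑ k, h k (X ω) (ξ r k ω) := fun ω => by
    simp only [h, hg, hgbar, hw, ← Finset.smul_sum, ← smul_sub, Finset.sum_sub_distrib]; rfl
  have hnext : ∀ ω, wbar (r + 1) ω - wstar
      = (wbar r ω - wstar - η r • gbar r ω) - η r • (g r ω - gbar r ω) := fun ω => by
    simp only [hwbar, hstep, smul_sum_partialSync_sub_smul _ hK.ne', hg, hgbar]
    module
  have hbound : ∀ ω, ‖wbar r ω - wstar - η r • gbar r ω‖ ^ 2
      ≤ (1 - μ * η r) * ‖wbar r ω - wstar‖ ^ 2 - 1 / 2 * η r * (f (wbar r ω) - f wstar)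
        + 2 * η r * (β / K) * ∑ k, ‖wbar r ω - w r k ω‖ ^ 2 := fun ω => by
    simpa only [Fintype.card_fin, hwbar, hgbar, hw] using norm_averaged_gradient_step_sq_le hβ
      hμ.le hdesc hstrong hmin (hηpos r).le (hηsmall r) (Φ (X ω))
  have i₁ : Integrable (fun ω => (1 - μ * η r) * ‖wbar r ω - wstar‖ ^ 2) P :=
    (hint₁ r).const_mul _
  have i₃ : Integrable (fun ω => 1 / 2 * η r * (f (wbar r ω) - f wstar)) P :=
    ((hint₃ r).sub (integrable_const _)).const_mul _
  have i₄ : Integrable (fun ω => 2 * η r * (β / K) * ∑ k, ‖wbar r ω - w r k ω‖ ^ 2) P :=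
    (integrable_finsetSum _ fun k _ => hint₄ r k).const_mul _
  have hB : Integrable (fun ω => (1 - μ * η r) * ‖wbar r ω - wstar‖ ^ 2
      - 1 / 2 * η r * (f (wbar r ω) - f wstar)
      + 2 * η r * (β / K) * ∑ k, ‖wbar r ω - w r k ω‖ ^ 2) P := (i₁.sub' i₃).add i₄
  calc ∫ ω, ‖wbar (r + 1) ω - wstar‖ ^ 2 ∂P
      = ∫ ω, ‖(wbar r ω - wstar - η r • gbar r ω) - η r • (g r ω - gbar r ω)‖ ^ 2 ∂P := by
        simp_rw [hnext]
    _ ≤ _ := integral_norm_sub_smul_sq_le_of_indepFun (Y := fun ω k => ξ r k ω)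
        (measurable_pi_lambda _ fun m => measurable_pi_lambda _ fun k => hξmeas _ _)
        (measurable_pi_lambda _ fun k => hξmeas r k) (hξindep.indepFun_rows_lt hξmeas r)
        (hξindep.map_row_eq_pi hξmeas hξlaw r) ha hA hh
        (fun k x => integral_smul_sub_eq_zero_of_integral_eq (hunbiased _) _) hD (hint₂ r) hB
        hbound (η r)
    _ = _ := by
      rw [integral_add (i₁.sub' i₃) i₄, integral_sub i₁ i₃, integral_const_mul,
        integral_const_mul, integral_const_mul, integral_finsetSum _ fun k _ => hint₄ r k]
      ring

/-- convergence of the averaged weights, one step: for partial-synchroni-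
zation local SGD on a `β`-smooth, `μ`-strongly convex `f` with minimizer `w*`, unbiased
stochastic gradients and stepsizes `η_r ≤ 1/(4β)`, with `w̄_r = (1/K)Σ_k w_r^k`,
`g_r = (1/K)Σ_k ∇f(w_r^k;ξ_r^k)` and `ḡ_r = (1/K)Σ_k ∇f(w_r^k)`, every iteration `r`
satisfies `E‖w̄_{r+1} − w*‖² ≤ (1 − μη_r) E‖w̄_r − w*‖² + η_r² E‖g_r − ḡ_r‖²
− (η_r/2) E(f(w̄_r) − f*) + 2η_r (β/K) Σ_k E‖w̄_r − w_r^k‖²`. -/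
theorem averaged_weights_one_step_inequality
    (d L K H : ℕ) (hK : 0 < K) (hH : 0 < H)
    (f : EuclideanSpace ℝ (Fin d) → ℝ)
    (β μ : ℝ) (hβ : 0 < β) (hμ : 0 < μ)
    (hsmooth : LipschitzWith β.toNNReal (fun x => gradient f x))
    (hstrong : ∀ x y, f x + ⟪gradient f x, y - x⟫ + μ / 2 * ‖y - x‖ ^ 2 ≤ f y)
    (wstar : EuclideanSpace ℝ (Fin d)) (hmin : ∀ w, f wstar ≤ f w)
    -- probability space and noise
    (Ω : Type) [MeasurableSpace Ω] (P : Measure Ω) [IsProbabilityMeasure P]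
    (Ξ : Type) [MeasurableSpace Ξ] (ν : Measure Ξ) [IsProbabilityMeasure ν]
    (ξ : ℕ → Fin K → Ω → Ξ)
    (hξmeas : ∀ r k, Measurable (ξ r k))
    (hξlaw : ∀ r k, Measure.map (ξ r k) P = ν)
    (hξindep : iIndepFun (fun q : ℕ × Fin K => ξ q.1 q.2) P)
    -- unbiased stochastic gradient oracle
    (SG : EuclideanSpace ℝ (Fin d) → Ξ → EuclideanSpace ℝ (Fin d))
    (hSGmeas : Measurable (Function.uncurry SG))
    (hunbiased : ∀ x, ∫ s, SG x s ∂ν = gradient f x)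
    -- stepsizes
    (η : ℕ → ℝ) (hηpos : ∀ r, 0 < η r) (hηsmall : ∀ r, η r ≤ 1 / (4 * β))
    -- layer structure and iterates of partial-synchronization local SGD
    (layer : Fin d → Fin L) (Hidx : Fin L → Fin H)
    (w : ℕ → Fin K → Ω → EuclideanSpace ℝ (Fin d))
    (w0 : EuclideanSpace ℝ (Fin d))
    (hinit : ∀ k ω, w 0 k ω = w0)
    (hupdate : ∀ r k ω (i : Fin d),
      w (r + 1) k ω i =
        if (r + 1) % H = (Hidx (layer i) : ℕ) then
          (K : ℝ)⁻¹ • ∑ j, (w r j ω - η r • SG (w r j ω) (ξ r j ω)) i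
        else (w r k ω - η r • SG (w r k ω) (ξ r k ω)) i)
    -- averaged iterates and gradients
    (wbar : ℕ → Ω → EuclideanSpace ℝ (Fin d))
    (hwbar : ∀ r ω, wbar r ω = (K : ℝ)⁻¹ • ∑ k, w r k ω)
    (g gbar : ℕ → Ω → EuclideanSpace ℝ (Fin d))
    (hg : ∀ r ω, g r ω = (K : ℝ)⁻¹ • ∑ k, SG (w r k ω) (ξ r k ω))
    (hgbar : ∀ r ω, gbar r ω = (K : ℝ)⁻¹ • ∑ k, gradient f (w r k ω))
    -- integrability of all quantities appearing in the inequality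
    (hint₁ : ∀ r, Integrable (fun ω => ‖wbar r ω - wstar‖ ^ 2) P)
    (hint₂ : ∀ r, Integrable (fun ω => ‖g r ω - gbar r ω‖ ^ 2) P)
    (hint₃ : ∀ r, Integrable (fun ω => f (wbar r ω)) P)
    (hint₄ : ∀ r k, Integrable (fun ω => ‖wbar r ω - w r k ω‖ ^ 2) P) :
    ∀ r, ∫ ω, ‖wbar (r + 1) ω - wstar‖ ^ 2 ∂P ≤
      (1 - μ * η r) * ∫ ω, ‖wbar r ω - wstar‖ ^ 2 ∂P
        + η r ^ 2 * ∫ ω, ‖g r ω - gbar r ω‖ ^ 2 ∂P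
        - 1 / 2 * η r * ∫ ω, (f (wbar r ω) - f wstar) ∂P
        + 2 * η r * (β / K) * ∑ k, ∫ ω, ‖wbar r ω - w r k ω‖ ^ 2 ∂P :=
  averaged_weights_one_step_inequality_general d L K H hK f β μ hβ hμ hsmooth hstrong wstar hmin Ω P
    Ξ ν ξ hξmeas hξlaw hξindep SG hSGmeas hunbiased η hηpos hηsmall layer Hidx w w0 hinit hupdate
    wbar hwbar g gbar hg hgbar hint₁ hint₂ hint₃ hint₄
end
end

section
/- Let f : ℝ^d → ℝ be β-smooth and μ-strongly convex with minimizer w* and f* = f(w*). Let w_r^1, …, w_r^K ∈ ℝ^d be arbitrary points, w̄_r = (1/K) Σ_{k=1}^K w_r^k, ḡ_r = (1/K) Σ_{k=1}^K ∇f(w_r^k), and let 0 < η_r ≤ 1/(4β). Then ‖w̄_r − w* − η_r ḡ_r‖² ≤ (1 − μ η_r) ‖w̄_r − w*‖² − (1/2) η_r (f(w̄_r) − f*) + (2 η_r β / K) Σ_{k=1}^K ‖w̄_r − w_r^k‖². -/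
open scoped RealInnerProductSpace

noncomputable section

section AuxLemmas
variable {E : Type*} [NormedAddCommGroup E] [InnerProductSpace ℝ E]

/-- Bisection descent lemma: a convex function (in the subgradient sense) whose
subgradient map is `β`-Lipschitz satisfies the quadratic upper bound with constant `β/2`. -/
theorem aux_descent (f : E → ℝ) (G : E → E) (β : ℝ)
    (hconv : ∀ x y, f x + ⟪G x, y - x⟫ ≤ f y)
    (hLip : ∀ x y, ‖G x - G y‖ ≤ β * ‖x - y‖) :
    ∀ x y, f y ≤ f x + ⟪G x, y - x⟫ + β / 2 * ‖y - x‖ ^ 2 := by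
  have key : ∀ n : ℕ, ∀ x y : E,
      f y - f x - ⟪G x, y - x⟫ ≤ β / 2 * (1 + (1/2 : ℝ) ^ n) * ‖y - x‖ ^ 2 := by
    intro n
    induction n with
    | zero =>
      intro x y
      have h3 : f y - f x - ⟪G x, y - x⟫ ≤ ⟪G y - G x, y - x⟫ := by
        have h2 : f y - f x ≤ ⟪G y, y - x⟫ := by
          have h := hconv y x
          have e : ⟪G y, x - y⟫ = -⟪G y, y - x⟫ := by
            rw [← inner_neg_right]; rw [neg_sub]
          linarith [e ▸ h]
        have e2 : ⟪G y - G x, y - x⟫ = ⟪G y, y - x⟫ - ⟪G x, y - x⟫ := by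
          rw [inner_sub_left]
        linarith
      have h4 : ⟪G y - G x, y - x⟫ ≤ β * ‖y - x‖ ^ 2 := by
        calc ⟪G y - G x, y - x⟫ ≤ ‖G y - G x‖ * ‖y - x‖ := real_inner_le_norm _ _
        _ ≤ β * ‖y - x‖ * ‖y - x‖ := by
            have := hLip y x
            nlinarith [norm_nonneg (y - x), norm_nonneg (G y - G x)]
        _ = β * ‖y - x‖ ^ 2 := by ring
      calc f y - f x - ⟪G x, y - x⟫ ≤ β * ‖y - x‖ ^ 2 := le_trans h3 h4
      _ = β / 2 * (1 + (1/2:ℝ)^0) * ‖y - x‖ ^ 2 := by norm_num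
    | succ n ih =>
      intro x y
      set m : E := (2:ℝ)⁻¹ • (x + y) with hm
      have hym : y - m = (2:ℝ)⁻¹ • (y - x) := by rw [hm]; module
      have hmx : m - x = (2:ℝ)⁻¹ • (y - x) := by rw [hm]; module
      have hnorm : ‖(2:ℝ)⁻¹ • (y - x)‖ ^ 2 = (1/4) * ‖y - x‖ ^ 2 := by
        rw [norm_smul]; simp; ring
      have i1 := ih m y
      have i2 := ih x m
      rw [hym] at i1
      rw [hmx] at i2
      rw [hnorm] at i1 i2
      have cross : ⟪G m - G x, y - m⟫ ≤ β / 4 * ‖y - x‖ ^ 2 := by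
        calc ⟪G m - G x, y - m⟫ ≤ ‖G m - G x‖ * ‖y - m‖ := real_inner_le_norm _ _
        _ ≤ (β * ‖m - x‖) * ‖y - m‖ := by
            have := hLip m x
            exact mul_le_mul_of_nonneg_right this (norm_nonneg _)
        _ = β / 4 * ‖y - x‖ ^ 2 := by
            rw [hym, hmx, norm_smul]; simp; ring
      have split : f y - f x - ⟪G x, y - x⟫ =
          (f y - f m - ⟪G m, y - m⟫) + (f m - f x - ⟪G x, m - x⟫) + ⟪G m - G x, y - m⟫ := by
        have e1 : ⟪G x, y - x⟫ = ⟪G x, y - m⟫ + ⟪G x, m - x⟫ := by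
          rw [← inner_add_right]; congr 1; abel
        have e2 : ⟪G m - G x, y - m⟫ = ⟪G m, y - m⟫ - ⟪G x, y - m⟫ := by
          rw [inner_sub_left]
        rw [e1, e2]; ring
      rw [split, hym, hmx]
      rw [hym] at cross
      have : (β / 2 * (1 + (1/2:ℝ)^n) * ((1/4) * ‖y - x‖^2)) * 2 + β/4 * ‖y-x‖^2
          = β / 2 * (1 + (1/2:ℝ)^(n+1)) * ‖y - x‖ ^ 2 := by ring
      linarith [i1, i2, cross]
  intro x y
  have lim : Filter.Tendsto (fun n : ℕ => β / 2 * (1 + (1/2:ℝ)^n) * ‖y - x‖^2)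
      Filter.atTop (nhds (β / 2 * (1 + 0) * ‖y - x‖^2)) := by
    apply Filter.Tendsto.mul_const
    apply Filter.Tendsto.const_mul
    apply Filter.Tendsto.const_add
    exact tendsto_pow_atTop_nhds_zero_of_lt_one (by norm_num) (by norm_num)
  have := ge_of_tendsto' lim (fun n => key n x y)
  simp only [add_zero] at this
  linarith

/-- From the descent lemma: the squared gradient norm is bounded by the function gap. -/
theorem aux_gradsq (f : E → ℝ) (G : E → E) (β : ℝ) (hβ : 0 < β)
    (hdesc : ∀ x y, f y ≤ f x + ⟪G x, y - x⟫ + β / 2 * ‖y - x‖ ^ 2)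
    (wstar : E) (hmin : ∀ w, f wstar ≤ f w) :
    ∀ x, ‖G x‖ ^ 2 ≤ 2 * β * (f x - f wstar) := by
  intro x
  set y := x - β⁻¹ • G x with hy
  have hyx : y - x = (-β⁻¹) • G x := by rw [hy]; module
  have hinner : ⟪G x, y - x⟫ = -β⁻¹ * ‖G x‖ ^ 2 := by
    rw [hyx, real_inner_smul_right, real_inner_self_eq_norm_sq]
  have hnorm : ‖y - x‖ ^ 2 = β⁻¹ ^ 2 * ‖G x‖ ^ 2 := by
    rw [hyx, norm_smul]
    simp [abs_of_pos hβ]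
    ring
  have h1 := hdesc x y
  have h2 := hmin y
  rw [hinner, hnorm] at h1
  have e : β / 2 * (β⁻¹ ^ 2 * ‖G x‖ ^ 2) = β⁻¹ / 2 * ‖G x‖ ^ 2 := by
    field_simp
  rw [e] at h1
  have h5 : β⁻¹ * ‖G x‖ ^ 2 ≤ 2 * (f x - f wstar) := by linarith
  have h6 := mul_le_mul_of_nonneg_left h5 hβ.le
  have e2 : β * (β⁻¹ * ‖G x‖ ^ 2) = ‖G x‖ ^ 2 := by field_simp
  linarith [h6, e2 ▸ h6]

/-- Jensen's inequality for the squared norm of an average. -/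
theorem aux_jensen (K : ℕ) (hK : 0 < K) (v : Fin K → E) :
    ‖(K : ℝ)⁻¹ • ∑ k, v k‖ ^ 2 ≤ (K : ℝ)⁻¹ * ∑ k, ‖v k‖ ^ 2 := by
  have hKpos : (0:ℝ) < K := by exact_mod_cast hK
  have h1 : ‖(K : ℝ)⁻¹ • ∑ k, v k‖ = (K:ℝ)⁻¹ * ‖∑ k, v k‖ := by
    rw [norm_smul]; simp [abs_of_nonneg (inv_nonneg.mpr hKpos.le)]
  have h2 : ‖∑ k, v k‖ ≤ ∑ k, ‖v k‖ := norm_sum_le _ _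
  have h3 : (∑ k, ‖v k‖) ^ 2 ≤ (K:ℝ) * ∑ k, ‖v k‖ ^ 2 := by
    have := sq_sum_le_card_mul_sum_sq (s := (Finset.univ : Finset (Fin K))) (f := fun k => ‖v k‖)
    simpa using this
  rw [h1, mul_pow]
  have h4 : ‖∑ k, v k‖ ^ 2 ≤ (K:ℝ) * ∑ k, ‖v k‖ ^ 2 :=
    le_trans (pow_le_pow_left₀ (norm_nonneg _) h2 2) h3
  calc (K:ℝ)⁻¹ ^ 2 * ‖∑ k, v k‖ ^ 2 ≤ (K:ℝ)⁻¹ ^ 2 * ((K:ℝ) * ∑ k, ‖v k‖ ^ 2) := by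
        apply mul_le_mul_of_nonneg_left h4 (by positivity)
    _ = (K:ℝ)⁻¹ * ∑ k, ‖v k‖ ^ 2 := by
        field_simp

/-- The average of shifted vectors. -/
theorem aux_avg_sub (K : ℕ) (hK : 0 < K) (v : Fin K → E) (c : E) :
    (K : ℝ)⁻¹ • ∑ k, v k - c = (K : ℝ)⁻¹ • ∑ k, (v k - c) := by
  have hn : (0:ℝ) < (K:ℝ) := by exact_mod_cast hK
  rw [Finset.sum_sub_distrib, smul_sub, Finset.sum_const, Finset.card_univ, Fintype.card_fin]
  congr 1
  rw [← Nat.cast_smul_eq_nsmul ℝ, smul_smul, inv_mul_cancel₀ hn.ne', one_smul]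

theorem aux_final (a A F S I B η β μ : ℝ) (hη0 : 0 < η) (hβ : 0 < β) (hμ : 0 < μ)
    (hF0 : 0 ≤ F) (hS0 : 0 ≤ S)
    (hinner : F + μ/2 * A - β/2 * S ≤ I)
    (hjen : a ≤ A) (hgbar2 : B ≤ 4 * β * F + 2 * β ^ 2 * S)
    (h4 : 4 * η * β ≤ 1) :
    a - 2 * η * I + η ^ 2 * B ≤ (1 - μ * η) * a - 1 / 2 * η * F + 2 * η * β * S := by
  linarith [mul_le_mul_of_nonneg_left hinner (by positivity : (0:ℝ) ≤ 2 * η),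
    mul_le_mul_of_nonneg_left hgbar2 (by positivity : (0:ℝ) ≤ η ^ 2),
    mul_le_mul_of_nonneg_left hjen (by positivity : (0:ℝ) ≤ μ * η),
    mul_nonneg (mul_nonneg hη0.le hF0) (by linarith : (0:ℝ) ≤ 1 - 4 * η * β),
    mul_nonneg (mul_nonneg (mul_nonneg hη0.le hβ.le) hS0) (by linarith : (0:ℝ) ≤ 1 - 4 * η * β),
    mul_nonneg hη0.le hF0,
    mul_nonneg (mul_nonneg hη0.le hβ.le) hS0]

end AuxLemmas

set_option maxHeartbeats 1000000 in
/-- deterministic descent inequality for an averaged gradient step.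
If `f` is `β`-smooth (gradient is `β`-Lipschitz) and `μ`-strongly convex with minimizer
`w*`, `w̄ = (1/K) Σ_k w_k`, `ḡ = (1/K) Σ_k ∇f(w_k)`, and `0 < η ≤ 1/(4β)`, then
`‖w̄ − w* − η ḡ‖² ≤ (1 − μη) ‖w̄ − w*‖² − (η/2)(f(w̄) − f*) + (2ηβ/K) Σ_k ‖w̄ − w_k‖²`. -/
theorem averaged_gradient_step_inequality
    (d : ℕ) (f : EuclideanSpace ℝ (Fin d) → ℝ)
    (β μ : ℝ) (hβ : 0 < β) (hμ : 0 < μ)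
    (hsmooth : LipschitzWith β.toNNReal (fun x => gradient f x))
    (hstrong : ∀ x y, f x + ⟪gradient f x, y - x⟫ + μ / 2 * ‖y - x‖ ^ 2 ≤ f y)
    (wstar : EuclideanSpace ℝ (Fin d)) (hmin : ∀ w, f wstar ≤ f w)
    (K : ℕ) (hK : 0 < K) (w : Fin K → EuclideanSpace ℝ (Fin d))
    (η : ℝ) (hη0 : 0 < η) (hη : η ≤ 1 / (4 * β))
    (wbar gbar : EuclideanSpace ℝ (Fin d))
    (hwbar : wbar = (K : ℝ)⁻¹ • ∑ k, w k)
    (hgbar : gbar = (K : ℝ)⁻¹ • ∑ k, gradient f (w k)) :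
    ‖wbar - wstar - η • gbar‖ ^ 2 ≤
      (1 - μ * η) * ‖wbar - wstar‖ ^ 2
        - 1 / 2 * η * (f wbar - f wstar)
        + 2 * η * β / K * ∑ k, ‖wbar - w k‖ ^ 2 := by
  set G : EuclideanSpace ℝ (Fin d) → EuclideanSpace ℝ (Fin d) := fun x => gradient f x with hGdef
  have hn : (0:ℝ) < (K:ℝ) := by exact_mod_cast hK
  have hLip : ∀ x y, ‖G x - G y‖ ≤ β * ‖x - y‖ := by
    intro x y
    have h := hsmooth.dist_le_mul x y
    rw [dist_eq_norm, dist_eq_norm] at h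
    calc ‖G x - G y‖ ≤ (β.toNNReal : ℝ) * ‖x - y‖ := h
    _ = β * ‖x - y‖ := by rw [Real.coe_toNNReal β hβ.le]
  have hconv : ∀ x y, f x + ⟪G x, y - x⟫ ≤ f y := by
    intro x y
    have h := hstrong x y
    nlinarith [sq_nonneg ‖y - x‖, hμ.le, sq_nonneg ‖y - x‖]
  have hdesc := aux_descent f G β hconv hLip
  have hgrad := aux_gradsq f G β hβ hdesc wstar hmin
  -- abbreviations
  set F : ℝ := f wbar - f wstar with hF
  set S : ℝ := (K:ℝ)⁻¹ * ∑ k, ‖wbar - w k‖ ^ 2 with hS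
  set A : ℝ := (K:ℝ)⁻¹ * ∑ k, ‖w k - wstar‖ ^ 2 with hA
  have hF0 : 0 ≤ F := sub_nonneg.mpr (hmin wbar)
  have hS0 : 0 ≤ S := by
    apply mul_nonneg (inv_nonneg.mpr hn.le)
    exact Finset.sum_nonneg fun k _ => sq_nonneg _
  -- expansion of the squared norm
  have expand : ‖wbar - wstar - η • gbar‖ ^ 2
      = ‖wbar - wstar‖ ^ 2 - 2 * η * ⟪wbar - wstar, gbar⟫ + η ^ 2 * ‖gbar‖ ^ 2 := by
    rw [norm_sub_sq_real, real_inner_smul_right, norm_smul]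
    simp [abs_of_pos hη0]
    ring
  -- per-k lower bound on the inner product
  have hper : ∀ k : Fin K, F + μ/2 * ‖w k - wstar‖ ^ 2 - β/2 * ‖wbar - w k‖ ^ 2
      ≤ ⟪wbar - wstar, G (w k)⟫ := by
    intro k
    have hd := hdesc (w k) wbar
    have hs := hstrong (w k) wstar
    have key : ⟪G (w k), wbar - wstar⟫ = ⟪G (w k), wbar - w k⟫ - ⟪G (w k), wstar - w k⟫ := by
      rw [← inner_sub_right]; congr 1; abel
    have hcomm : ⟪wbar - wstar, G (w k)⟫ = ⟪G (w k), wbar - wstar⟫ := real_inner_comm _ _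
    have hrev : ‖wstar - w k‖ = ‖w k - wstar‖ := norm_sub_rev _ _
    rw [hcomm, key]
    rw [hrev] at hs
    linarith
  -- summed inner product bound
  have hinner : F + μ/2 * A - β/2 * S ≤ ⟪wbar - wstar, gbar⟫ := by
    have hsum := Finset.sum_le_sum (fun k (_ : k ∈ Finset.univ) => hper k)
    have hdist : ∑ k : Fin K, (F + μ/2 * ‖w k - wstar‖ ^ 2 - β/2 * ‖wbar - w k‖ ^ 2)
        = (K:ℝ) * F + μ/2 * ∑ k, ‖w k - wstar‖ ^ 2 - β/2 * ∑ k, ‖wbar - w k‖ ^ 2 := by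
      rw [Finset.sum_sub_distrib, Finset.sum_add_distrib, ← Finset.mul_sum, ← Finset.mul_sum,
        Finset.sum_const, Finset.card_univ, Fintype.card_fin, nsmul_eq_mul]
    rw [hdist] at hsum
    have hib : ⟪wbar - wstar, gbar⟫ = (K:ℝ)⁻¹ * ∑ k, ⟪wbar - wstar, G (w k)⟫ := by
      rw [hgbar, real_inner_smul_right, inner_sum]
    rw [hib]
    have := mul_le_mul_of_nonneg_left hsum (inv_nonneg.mpr hn.le)
    calc F + μ/2 * A - β/2 * S
        = (K:ℝ)⁻¹ * ((K:ℝ) * F + μ/2 * ∑ k, ‖w k - wstar‖ ^ 2 - β/2 * ∑ k, ‖wbar - w k‖ ^ 2) := by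
          rw [hA, hS]
          field_simp
      _ ≤ (K:ℝ)⁻¹ * ∑ k, ⟪wbar - wstar, G (w k)⟫ := this
  -- Jensen : ‖wbar - wstar‖² ≤ A
  have hjen : ‖wbar - wstar‖ ^ 2 ≤ A := by
    have havg : wbar - wstar = (K:ℝ)⁻¹ • ∑ k, (w k - wstar) := by
      rw [hwbar]; exact aux_avg_sub K hK w wstar
    rw [havg, hA]
    exact aux_jensen K hK _
  -- bound on ‖gbar‖²
  have hgbar2 : ‖gbar‖ ^ 2 ≤ 4 * β * F + 2 * β ^ 2 * S := by
    have he : gbar - G wbar = (K:ℝ)⁻¹ • ∑ k, (G (w k) - G wbar) := by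
      rw [hgbar]; exact aux_avg_sub K hK _ _
    have hE1 : ‖gbar - G wbar‖ ^ 2 ≤ (K:ℝ)⁻¹ * ∑ k, ‖G (w k) - G wbar‖ ^ 2 := by
      rw [he]; exact aux_jensen K hK _
    have hE2 : ∑ k : Fin K, ‖G (w k) - G wbar‖ ^ 2 ≤ ∑ k : Fin K, β ^ 2 * ‖wbar - w k‖ ^ 2 := by
      apply Finset.sum_le_sum
      intro k _
      have h := hLip (w k) wbar
      have hr : ‖w k - wbar‖ = ‖wbar - w k‖ := norm_sub_rev _ _
      rw [hr] at h
      nlinarith [norm_nonneg (G (w k) - G wbar), norm_nonneg (wbar - w k)]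
    have hE3 : ‖gbar - G wbar‖ ^ 2 ≤ β ^ 2 * S := by
      calc ‖gbar - G wbar‖ ^ 2 ≤ (K:ℝ)⁻¹ * ∑ k, ‖G (w k) - G wbar‖ ^ 2 := hE1
        _ ≤ (K:ℝ)⁻¹ * ∑ k, β ^ 2 * ‖wbar - w k‖ ^ 2 := by
            apply mul_le_mul_of_nonneg_left hE2 (inv_nonneg.mpr hn.le)
        _ = β ^ 2 * S := by rw [hS, ← Finset.mul_sum]; ring
    have hGw : ‖G wbar‖ ^ 2 ≤ 2 * β * F := hgrad wbar
    have hsplit : ‖gbar‖ ^ 2 ≤ 2 * ‖G wbar‖ ^ 2 + 2 * ‖gbar - G wbar‖ ^ 2 := by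
      have hid : G wbar + (gbar - G wbar) = gbar := by abel
      have hnormadd := norm_add_sq_real (G wbar) (gbar - G wbar)
      rw [hid] at hnormadd
      have hcs := real_inner_le_norm (G wbar) (gbar - G wbar)
      nlinarith [sq_nonneg (‖G wbar‖ - ‖gbar - G wbar‖), hnormadd, hcs]
    nlinarith [hE3, hGw, hsplit]
  -- final arithmetic
  have h4 : 4 * η * β ≤ 1 := by
    rw [le_div_iff₀ (by positivity)] at hη
    linarith
  have hgoalS : 2 * η * β / (K:ℝ) * ∑ k, ‖wbar - w k‖ ^ 2 = 2 * η * β * S := by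
    rw [hS]; ring
  rw [expand, hgoalS]
  exact aux_final (‖wbar - wstar‖ ^ 2) A F S (⟪wbar - wstar, gbar⟫) (‖gbar‖ ^ 2)
    η β μ hη0 hβ hμ hF0 hS0 hinner hjen hgbar2 h4
end
end

section
/- Let μ > 0, a > 1, A > 0, B ≥ 0, C ≥ 0, and let {a_r}_{r≥0} and {e_r}_{r≥0} be sequences of nonnegative reals satisfying a_{r+1} ≤ (1 − μ η_r) a_r − η_r e_r A + η_r² B + η_r³ C for all r ≥ 0, where η_r = 4/(μ(a+r)). Then for every R ≥ 1, with p_r = (a+r)² and S_R = Σ_{r=0}^{R−1} p_r, it holds that (A / S_R) Σ_{r=0}^{R−1} p_r e_r ≤ (μ a³ / (4 S_R)) a_0 + (2 R (R + 2a) / (μ S_R)) B + (16 R / (μ² S_R)) C. -/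
set_option maxHeartbeats 1600000 in
/-- Martingale-type convergence of real sequences: if nonnegative sequences
`a_r, e_r` satisfy `a_{r+1} ≤ (1 − μ η_r) a_r − η_r e_r A + η_r² B + η_r³ C` with
`η_r = 4/(μ(a+r))`, then for every `R ≥ 1`, with `p_r = (a+r)²` and `S_R = Σ_{r<R} p_r`,
`(A/S_R) Σ_{r<R} p_r e_r ≤ (μ a³/(4 S_R)) a_0 + (2R(R+2a)/(μ S_R)) B + (16R/(μ² S_R)) C`. -/
theorem martingale_convergence_sequences
    (μ a A B C : ℝ) (hμ : 0 < μ) (ha : 1 < a) (hA : 0 < A) (hB : 0 ≤ B) (hC : 0 ≤ C)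
    (x e : ℕ → ℝ) (hx : ∀ r, 0 ≤ x r) (he : ∀ r, 0 ≤ e r)
    (η : ℕ → ℝ) (hη : ∀ r, η r = 4 / (μ * (a + r)))
    (hrec : ∀ r, x (r + 1) ≤ (1 - μ * η r) * x r - η r * e r * A
      + η r ^ 2 * B + η r ^ 3 * C)
    (R : ℕ) (hR : 1 ≤ R)
    (p : ℕ → ℝ) (hp : ∀ r, p r = (a + r) ^ 2)
    (S : ℝ) (hS : S = ∑ r ∈ Finset.range R, p r) :
    A / S * ∑ r ∈ Finset.range R, p r * e r ≤
      μ * a ^ 3 / (4 * S) * x 0 + 2 * R * (R + 2 * a) / (μ * S) * B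
        + 16 * R / (μ ^ 2 * S) * C := by
  have hS0 : 0 < S := by
    rw [hS]
    apply Finset.sum_pos
    · intro i _
      rw [hp]
      have : (0:ℝ) ≤ (i:ℝ) := Nat.cast_nonneg i
      positivity
    · exact Finset.nonempty_range_iff.mpr (by omega)
  set G : ℕ → ℝ := fun r => μ ^ 3 * (a + r - 1) ^ 3 * x r with hG
  clear_value G
  have step : ∀ r : ℕ, 4 * μ ^ 2 * A * (p r * e r) ≤
      G r - G (r + 1) + 16 * μ * (a + r) * B + 64 * C := by
    intro r
    have hr0 : (0:ℝ) ≤ (r:ℝ) := Nat.cast_nonneg r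
    have ht : (1:ℝ) < a + r := by linarith
    have ht0 : (0:ℝ) < a + r := by linarith
    have h := hrec r
    rw [hη r] at h
    have h3 := mul_le_mul_of_nonneg_left h
      (by positivity : (0:ℝ) ≤ μ ^ 3 * (a + r) ^ 3)
    have e1 : μ ^ 3 * (a + (r:ℝ)) ^ 3 *
        ((1 - μ * (4 / (μ * (a + r)))) * x r - 4 / (μ * (a + r)) * e r * A
          + (4 / (μ * (a + r))) ^ 2 * B + (4 / (μ * (a + r))) ^ 3 * C)
        = μ ^ 3 * (a + r) ^ 2 * ((a + r) - 4) * x r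
          - 4 * μ ^ 2 * (a + r) ^ 2 * (e r * A) + 16 * μ * (a + r) * B + 64 * C := by
      field_simp
      ring
    rw [e1] at h3
    have hx1 : (0:ℝ) ≤ μ ^ 3 * ((a + r) ^ 2 + 3 * (a + r) - 1) * x r := by
      have : (0:ℝ) ≤ (a + r) ^ 2 + 3 * (a + r) - 1 := by nlinarith
      have := hx r
      positivity
    simp only [hG]
    push_cast
    rw [hp r]
    nlinarith [h3, hx1]
  set T : ℝ := ∑ r ∈ Finset.range R, p r * e r with hT
  clear_value T
  have hId : (∑ r ∈ Finset.range R, (r:ℝ)) = R * (R - 1) / 2 := by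
    have := Finset.sum_range_id_mul_two R
    have h2 : ((∑ i ∈ Finset.range R, i) * 2 : ℕ) = (R * (R - 1) : ℕ) := this
    have : ((∑ i ∈ Finset.range R, (i:ℝ)) * 2) = (R:ℝ) * ((R:ℝ) - 1) := by
      have := congrArg (Nat.cast : ℕ → ℝ) h2
      push_cast [Nat.cast_sub hR] at this
      linarith [this]
    linarith
  have hGR : 0 ≤ G R := by
    have : (0:ℝ) ≤ (R:ℝ) := Nat.cast_nonneg R
    have h1 : (0:ℝ) ≤ a + R - 1 := by linarith
    have := hx R
    simp only [hG]
    positivity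
  have hG0 : G 0 ≤ μ ^ 3 * a ^ 3 * x 0 := by
    have h1 : G 0 = μ ^ 3 * (a - 1) ^ 3 * x 0 := by simp [hG]
    rw [h1]
    nlinarith [mul_nonneg (mul_nonneg (pow_pos hμ 3).le
      (show (0:ℝ) ≤ 3*a^2-3*a+1 by nlinarith [sq_nonneg (2*a-1)])) (hx 0)]
  have hsum : 4 * μ ^ 2 * A * T ≤
      (G 0 - G R) + 16 * μ * B * (R * a + (∑ r ∈ Finset.range R, (r:ℝ)))
        + 64 * C * R := by
    have h1 : ∑ r ∈ Finset.range R, (4 * μ ^ 2 * A * (p r * e r)) ≤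
        ∑ r ∈ Finset.range R, (G r - G (r + 1) + 16 * μ * (a + r) * B + 64 * C) :=
      Finset.sum_le_sum fun r _ => step r
    calc 4 * μ ^ 2 * A * T = ∑ r ∈ Finset.range R, 4 * μ ^ 2 * A * (p r * e r) := by
          rw [hT, Finset.mul_sum]
      _ ≤ ∑ r ∈ Finset.range R, (G r - G (r + 1) + 16 * μ * (a + r) * B + 64 * C) :=
          Finset.sum_le_sum fun r _ => step r
      _ = (∑ r ∈ Finset.range R, (G r - G (r + 1)))
            + (∑ r ∈ Finset.range R, (16 * μ * (a + r) * B))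
            + (∑ r ∈ Finset.range R, (64:ℝ) * C) := by
          rw [← Finset.sum_add_distrib, ← Finset.sum_add_distrib]
      _ = (G 0 - G R) + 16 * μ * B * (R * a + (∑ r ∈ Finset.range R, (r:ℝ)))
            + 64 * C * R := by
          rw [Finset.sum_range_sub' G R]
          have e2 : ∑ r ∈ Finset.range R, 16 * μ * (a + ↑r) * B
              = 16 * μ * B * (↑R * a + ∑ r ∈ Finset.range R, (r:ℝ)) := by
            calc ∑ r ∈ Finset.range R, 16 * μ * (a + ↑r) * B
                = ∑ r ∈ Finset.range R, (16 * μ * B * a + 16 * μ * B * (r:ℝ)) :=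
                  Finset.sum_congr rfl (by intros; ring)
              _ = R • (16 * μ * B * a) + 16 * μ * B * ∑ r ∈ Finset.range R, (r:ℝ) := by
                  rw [Finset.sum_add_distrib, Finset.sum_const, ← Finset.mul_sum, Finset.card_range]
              _ = 16 * μ * B * (↑R * a + ∑ r ∈ Finset.range R, (r:ℝ)) := by
                  rw [nsmul_eq_mul]; ring
          have e3 : ∑ _r ∈ Finset.range R, (64:ℝ) * C = 64 * C * ↑R := by
            rw [Finset.sum_const, Finset.card_range, nsmul_eq_mul]; ring
          rw [e2, e3]
  have hRR : (1:ℝ) ≤ (R:ℝ) := by exact_mod_cast hR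
  have key4 : 4 * μ ^ 2 * (A * T) ≤
      μ ^ 3 * a ^ 3 * x 0 + 8 * μ * R * (R + 2 * a) * B + 64 * R * C := by
    rw [hId] at hsum
    have hint : (0:ℝ) ≤ μ * B * R := by positivity
    linarith [hsum, hGR, hG0, hint]
  have key : A * T ≤ μ * a ^ 3 / 4 * x 0 + 2 * R * (R + 2 * a) / μ * B
      + 16 * R / μ ^ 2 * C := by
    have h5 : 4 * μ ^ 2 * (μ * a ^ 3 / 4 * x 0 + 2 * R * (R + 2 * a) / μ * B
        + 16 * R / μ ^ 2 * C)
        = μ ^ 3 * a ^ 3 * x 0 + 8 * μ * R * (R + 2 * a) * B + 64 * R * C := by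
      field_simp
      ring
    have := key4
    rw [← h5] at this
    exact le_of_mul_le_mul_left this (by positivity)
  calc A / S * T = (A * T) / S := by ring
    _ ≤ (μ * a ^ 3 / 4 * x 0 + 2 * R * (R + 2 * a) / μ * B + 16 * R / μ ^ 2 * C) / S :=
        (div_le_div_iff_of_pos_right hS0).mpr key
    _ = μ * a ^ 3 / (4 * S) * x 0 + 2 * R * (R + 2 * a) / (μ * S) * B
          + 16 * R / (μ ^ 2 * S) * C := by
        rw [← div_div, ← div_div, ← div_div]
        ring
end
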